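/- CN-side derivative identity: For a multi-edge type D-GLDPC ensemble in which every check-node local code has minimum distance at least 2, for all l,m ∈ E, the partial derivative of the aggregate check-node EXIT function I_{EC,l}(·) with respect to its m-th argument, evaluated at the all-ones point I = (1,…,1), equals C^{l,m} = Σ_{δ∈F_{C2}} (ρ_{δ,l}/s_{δ,l}) ξ_2^{(δ)}(l,m). -/

import Mathlib

open scoped Classical

noncomputable section

namespace MET

/-- Hamming weight of a binary vector. -/
def hWeight {m : ℕ} (x : Fin m → ZMod 2) : ℕ :=
  (Finset.univ.filter fun i => x i ≠ 0).card

/-- The row space of `G` (the local code) has minimum Hamming weight at least 2. -/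
def HasMinDistGE2 {k q : ℕ} (G : Matrix (Fin k) (Fin q) (ZMod 2)) : Prop :=
  ∀ x : Fin k → ZMod 2, Matrix.vecMul x G ≠ 0 → 2 ≤ hWeight (Matrix.vecMul x G)

/-- The row space of `G` has minimum Hamming weight exactly 2. -/
def HasMinDistEq2 {k q : ℕ} (G : Matrix (Fin k) (Fin q) (ZMod 2)) : Prop :=
  HasMinDistGE2 G ∧ ∃ x : Fin k → ZMod 2, hWeight (Matrix.vecMul x G) = 2

/-- The weight-2 vector supported on `{i,j}`. -/
def wt2vec {q : ℕ} (i j : Fin q) : Fin q → ZMod 2 :=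
  fun r => if r = i ∨ r = j then 1 else 0

/-- Number of columns of edge type `l`. -/
def colCount {q n : ℕ} (τ : Fin q → Fin n) (l : Fin n) : ℕ :=
  (Finset.univ.filter fun j => τ j = l).card

/-- Rank of the matrix formed by the columns of `G` indexed by `A` together with the columns
of the `k × k` identity matrix indexed by `T`. -/
def colRank {k q : ℕ} (G : Matrix (Fin k) (Fin q) (ZMod 2))
    (A : Finset (Fin q)) (T : Finset (Fin k)) : ℕ :=
  Matrix.rank (Matrix.of fun (i : Fin k) (j : {x // x ∈ A} ⊕ {x // x ∈ T}) =>
    Sum.elim (fun a => G i a.1) (fun t => if i = t.1 then (1 : ZMod 2) else 0) j)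

/-- Multi-type split information function `ẽ_{g;u}` of a VN generator matrix. -/
def eTilde {n k q : ℕ} (G : Matrix (Fin k) (Fin q) (ZMod 2)) (τ : Fin q → Fin n)
    (g : Fin n → ℕ) (u : ℕ) : ℕ :=
  ∑ A ∈ Finset.univ.filter (fun A : Finset (Fin q) =>
      ∀ l, (A.filter fun j => τ j = l).card = g l),
    ∑ T ∈ Finset.univ.filter (fun T : Finset (Fin k) => T.card = u),
      colRank G A T

/-- Multi-type information function `ẽ_g` of a CN generator matrix. -/
def eTildeC {n h s : ℕ} (G : Matrix (Fin h) (Fin s) (ZMod 2)) (τ : Fin s → Fin n)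
    (g : Fin n → ℕ) : ℕ :=
  ∑ A ∈ Finset.univ.filter (fun A : Finset (Fin s) =>
      ∀ l, (A.filter fun j => τ j = l).card = g l),
    colRank G A ∅

/-- `χ_{2,u}(l,m)`: ordered pairs of distinct columns of types `l,m` supporting a weight-2
codeword generated by a weight-`u` input word. -/
def chi2 {n k q : ℕ} (G : Matrix (Fin k) (Fin q) (ZMod 2)) (τ : Fin q → Fin n)
    (u : ℕ) (l m : Fin n) : ℕ :=
  (Finset.univ.filter fun p : Fin q × Fin q =>
    p.1 ≠ p.2 ∧ τ p.1 = l ∧ τ p.2 = m ∧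
      ∃ x : Fin k → ZMod 2, hWeight x = u ∧ Matrix.vecMul x G = wt2vec p.1 p.2).card

/-- `ξ_2(l,m)`: ordered pairs of distinct coordinates of types `l,m` supporting a weight-2
codeword of the row space. -/
def xi2 {n h s : ℕ} (G : Matrix (Fin h) (Fin s) (ZMod 2)) (τ : Fin s → Fin n)
    (l m : Fin n) : ℕ :=
  (Finset.univ.filter fun p : Fin s × Fin s =>
    p.1 ≠ p.2 ∧ τ p.1 = l ∧ τ p.2 = m ∧
      ∃ x : Fin h → ZMod 2, Matrix.vecMul x G = wt2vec p.1 p.2).card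

/-- Range of the tuple `t`: `0 ≤ t l ≤ q l` for `l ≠ e` and `0 ≤ t e ≤ q e - 1`. -/
def tRange {n : ℕ} (q : Fin n → ℕ) (e : Fin n) : Finset (Fin n → ℕ) :=
  Fintype.piFinset fun l => Finset.range (if l = e then q l else q l + 1)

/-- The coefficient `a^{(γ,e)}_{t,z}` of the VN EXIT function. -/
def aVN {n k q : ℕ} (G : Matrix (Fin k) (Fin q) (ZMod 2)) (τ : Fin q → Fin n)
    (e : Fin n) (t : Fin n → ℕ) (z : ℕ) : ℝ :=
  ((colCount τ e - t e : ℕ) : ℝ) *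
      (eTilde G τ (fun l => colCount τ l - t l) (k - z) : ℝ)
    - ((t e + 1 : ℕ) : ℝ) *
      (eTilde G τ (fun l => colCount τ l - t l - (if l = e then 1 else 0)) (k - z) : ℝ)

/-- The coefficient `a^{(δ,e)}_{t}` of the CN EXIT function. -/
def aCN {n h s : ℕ} (G : Matrix (Fin h) (Fin s) (ZMod 2)) (τ : Fin s → Fin n)
    (e : Fin n) (t : Fin n → ℕ) : ℝ :=
  ((colCount τ e - t e : ℕ) : ℝ) *
      (eTildeC G τ (fun l => colCount τ l - t l) : ℝ)
    - ((t e + 1 : ℕ) : ℝ) *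
      (eTildeC G τ (fun l => colCount τ l - t l - (if l = e then 1 else 0)) : ℝ)

/-- Per-type VN EXIT function `I_{EV,e}^{(γ)}(I, ε)`. -/
def IEV {n k q : ℕ} (G : Matrix (Fin k) (Fin q) (ZMod 2)) (τ : Fin q → Fin n)
    (e : Fin n) (I : Fin n → ℝ) (ε : ℝ) : ℝ :=
  1 - (1 / (colCount τ e : ℝ)) *
    ∑ z ∈ Finset.range (k + 1), ε ^ z * (1 - ε) ^ (k - z) *
      ∑ t ∈ tRange (colCount τ) e,
        (∏ l, (1 - I l) ^ t l * (I l) ^ (colCount τ l - t l - (if l = e then 1 else 0))) *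
          aVN G τ e t z

/-- Per-type CN EXIT function `I_{EC,e}^{(δ)}(I)`. -/
def IEC {n h s : ℕ} (G : Matrix (Fin h) (Fin s) (ZMod 2)) (τ : Fin s → Fin n)
    (e : Fin n) (I : Fin n → ℝ) : ℝ :=
  1 - (1 / (colCount τ e : ℝ)) *
    ∑ t ∈ tRange (colCount τ) e,
      (∏ l, (1 - I l) ^ t l * (I l) ^ (colCount τ l - t l - (if l = e then 1 else 0))) *
        aCN G τ e t

/-- A variable node type: a `k × q` generator matrix over `GF(2)` with a typing of its
columns by edge types (no punctured bits). -/
structure VNType (n : ℕ) where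
  k : ℕ
  q : ℕ
  G : Matrix (Fin k) (Fin q) (ZMod 2)
  τ : Fin q → Fin n

/-- A check node type: an `h × s` generator matrix over `GF(2)` with a typing of its
columns by edge types. -/
structure CNType (n : ℕ) where
  h : ℕ
  s : ℕ
  G : Matrix (Fin h) (Fin s) (ZMod 2)
  τ : Fin s → Fin n

/-- The variable-node side of a MET D-GLDPC ensemble. -/
structure VNSide (n : ℕ) where
  nV : ℕ
  vn : Fin nV → VNType n
  lam : Fin nV → Fin n → ℝ
  lam_nonneg : ∀ γ l, 0 ≤ lam γ l
  lam_sum : ∀ l, ∑ γ, lam γ l = 1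
  lam_pos_iff : ∀ γ l, 0 < lam γ l ↔ 0 < colCount (vn γ).τ l

/-- The check-node side of a MET D-GLDPC ensemble. -/
structure CNSide (n : ℕ) where
  nC : ℕ
  cn : Fin nC → CNType n
  rho : Fin nC → Fin n → ℝ
  rho_nonneg : ∀ δ l, 0 ≤ rho δ l
  rho_sum : ∀ l, ∑ δ, rho δ l = 1
  rho_pos_iff : ∀ δ l, 0 < rho δ l ↔ 0 < colCount (cn δ).τ l

/-- A MET D-GLDPC ensemble. -/
structure Ensemble (n : ℕ) extends VNSide n, CNSide n

/-- All VN local codes have full-rank generator matrix and minimum distance at least 2. -/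
def VNSide.Good {n : ℕ} (V : VNSide n) : Prop :=
  ∀ γ, ((V.vn γ).G).rank = (V.vn γ).k ∧ HasMinDistGE2 (V.vn γ).G

/-- All CN local codes have full-rank generator matrix and minimum distance at least 2. -/
def CNSide.Good {n : ℕ} (C : CNSide n) : Prop :=
  ∀ δ, ((C.cn δ).G).rank = (C.cn δ).h ∧ HasMinDistGE2 (C.cn δ).G

/-- The matrix `P(ε)` with entries `P^{l,m}(ε)`. -/
def Pmat {n : ℕ} (V : VNSide n) (ε : ℝ) : Matrix (Fin n) (Fin n) ℝ :=
  Matrix.of fun l m =>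
    ∑ γ, if HasMinDistEq2 (V.vn γ).G then
      (V.lam γ l / (colCount (V.vn γ).τ l : ℝ)) *
        ∑ u ∈ Finset.Icc 1 (V.vn γ).k, (chi2 (V.vn γ).G (V.vn γ).τ u l m : ℝ) * ε ^ u
    else 0

/-- The matrix `C` with entries `C^{l,m}`. -/
def Cmat {n : ℕ} (C : CNSide n) : Matrix (Fin n) (Fin n) ℝ :=
  Matrix.of fun l m =>
    ∑ δ, if HasMinDistEq2 (C.cn δ).G then
      (C.rho δ l / (colCount (C.cn δ).τ l : ℝ)) * (xi2 (C.cn δ).G (C.cn δ).τ l m : ℝ)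
    else 0

/-- Aggregate VN EXIT function `I_{EV,e}(I,ε)`. -/
def IEVagg {n : ℕ} (V : VNSide n) (e : Fin n) (I : Fin n → ℝ) (ε : ℝ) : ℝ :=
  ∑ γ ∈ Finset.univ.filter (fun γ => 0 < V.lam γ e),
    V.lam γ e * IEV (V.vn γ).G (V.vn γ).τ e I ε

/-- Aggregate CN EXIT function `I_{EC,e}(I)`. -/
def IECagg {n : ℕ} (C : CNSide n) (e : Fin n) (I : Fin n → ℝ) : ℝ :=
  ∑ δ ∈ Finset.univ.filter (fun δ => 0 < C.rho δ e),
    C.rho δ e * IEC (C.cn δ).G (C.cn δ).τ e I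

/-- The EXIT recursion `f(·,ε)`. -/
def exitMap {n : ℕ} (E : Ensemble n) (ε : ℝ) (I : Fin n → ℝ) : Fin n → ℝ :=
  fun e => IEVagg E.toVNSide e (fun m => IECagg E.toCNSide m I) ε

/-- Local stability of the fixed point `1` of the EXIT recursion. -/
def LocallyStable {n : ℕ} (E : Ensemble n) (ε : ℝ) : Prop :=
  ∃ U : Set (Fin n → ℝ), IsOpen U ∧ (fun _ => (1 : ℝ)) ∈ U ∧
    ∀ I ∈ U ∩ Set.Icc (fun _ => (0 : ℝ)) (fun _ => (1 : ℝ)),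
      Filter.Tendsto (fun m => (exitMap E ε)^[m] I) Filter.atTop (nhds fun _ => (1 : ℝ))

/-- Spectral radius of a real square matrix: the maximum modulus of its complex
eigenvalues. -/
def specRad {m : ℕ} (A : Matrix (Fin m) (Fin m) ℝ) : ℝ :=
  (spectralRadius ℂ (A.map fun x : ℝ => (x : ℂ))).toReal


/-! At `I = 1` every factor `(1 - I_{l'})^{t_{l'}}` with `l' ≠ m` kills the terms with
`t_{l'} > 0`, and differentiating `(1 - x)^{t_m} x^β` at `x = 1` kills those with `t_m ≥ 2`. Only
`t = 0` and `t = e_m` remain, so the derivative is `a_{e_m} / s_l` provided `a_0 = 0`.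

The coefficients only involve ranks of the generator matrix with one or two columns deleted.
Since `G` has full row rank and its code has minimum distance at least 2, deleting one column
keeps rank `h`, which gives `a_0 = 0`, while deleting two columns `i ≠ j` lowers the rank by one
exactly when the weight-2 word supported on `{i, j}` is a codeword. Counting the ordered pairs of
deleted columns turns `a_{e_m}` into `ξ_2(l, m)`; codes of minimum distance above 2 have
`ξ_2 = 0`. -/

open Finset Matrix

section LocalCode

variable {h s : ℕ} (G : Matrix (Fin h) (Fin s) (ZMod 2))

def vanishingOn (A : Finset (Fin s)) : Submodule (ZMod 2) (Fin h → ZMod 2) where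
  carrier := {x | ∀ a ∈ A, (x ᵥ* G) a = 0}
  add_mem' hx hy a ha := by rw [add_vecMul, Pi.add_apply, hx a ha, hy a ha, add_zero]
  zero_mem' a _ := by rw [zero_vecMul, Pi.zero_apply]
  smul_mem' c x hx a ha := by rw [smul_vecMul, Pi.smul_apply, hx a ha, smul_zero]

variable {G}

lemma mem_vanishingOn {A : Finset (Fin s)} {x : Fin h → ZMod 2} :
    x ∈ vanishingOn G A ↔ ∀ a ∈ A, (x ᵥ* G) a = 0 := Iff.rfl

variable (G)

lemma colRank_empty_add_finrank_vanishingOn (A : Finset (Fin s)) :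
    colRank G A ∅ + Module.finrank (ZMod 2) (vanishingOn G A) = h := by
  set M : Matrix (Fin h) ({x // x ∈ A} ⊕ {x // x ∈ (∅ : Finset (Fin h))}) (ZMod 2) :=
    Matrix.of fun i j =>
      Sum.elim (fun a => G i a.1) (fun t => if i = t.1 then (1 : ZMod 2) else 0) j
  have hker : LinearMap.ker Mᵀ.mulVecLin = vanishingOn G A := by
    ext x
    simp only [LinearMap.mem_ker, mulVecLin_apply, mulVec_transpose, mem_vanishingOn]
    constructor
    · intro hx a ha
      exact congrFun hx (Sum.inl ⟨a, ha⟩)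
    · intro hx
      funext j
      rcases j with a | t
      · exact hx a.1 a.2
      · exact absurd t.2 (notMem_empty _)
  have hrank : colRank G A ∅ = Mᵀ.rank := (rank_transpose M).symm
  rw [hrank, Matrix.rank, ← hker, LinearMap.finrank_range_add_finrank_ker, Module.finrank_fin_fun]

variable {G}

lemma eq_zero_of_vecMul_eq_zero (hrk : G.rank = h) {x : Fin h → ZMod 2} (hx : x ᵥ* G = 0) :
    x = 0 := by
  have hker : Module.finrank (ZMod 2) (LinearMap.ker Gᵀ.mulVecLin) = 0 := by
    have := LinearMap.finrank_range_add_finrank_ker Gᵀ.mulVecLin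
    rw [← Matrix.rank, rank_transpose, hrk, Module.finrank_fin_fun] at this
    omega
  have hx' : x ∈ LinearMap.ker Gᵀ.mulVecLin := by
    rw [LinearMap.mem_ker, mulVecLin_apply, mulVec_transpose, hx]
  rwa [Submodule.finrank_eq_zero.mp hker, Submodule.mem_bot] at hx'

lemma support_subset_compl_of_mem_vanishingOn {A : Finset (Fin s)} {x : Fin h → ZMod 2}
    (hx : x ∈ vanishingOn G A) : univ.filter (fun a => (x ᵥ* G) a ≠ 0) ⊆ Aᶜ := by
  intro a ha
  rw [mem_compl]
  exact fun haA => (mem_filter.mp ha).2 (hx a haA)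

lemma vanishingOn_eq_bot (hrk : G.rank = h) (hmd : HasMinDistGE2 G) {A : Finset (Fin s)}
    (hA : #Aᶜ ≤ 1) : vanishingOn G A = ⊥ := by
  refine (Submodule.eq_bot_iff _).mpr fun x hx => ?_
  by_contra hx0
  have hw := hmd x fun h0 => hx0 (eq_zero_of_vecMul_eq_zero hrk h0)
  have := card_le_card (support_subset_compl_of_mem_vanishingOn hx)
  rw [hWeight] at hw
  omega

lemma eq_wt2vec_of_support_subset {i j : Fin s} (hij : i ≠ j) {y : Fin s → ZMod 2}
    (hsupp : univ.filter (fun a => y a ≠ 0) ⊆ {i, j}) (hw : 2 ≤ hWeight y) :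
    y = wt2vec i j := by
  have heq : univ.filter (fun a => y a ≠ 0) = {i, j} :=
    eq_of_subset_of_card_le hsupp (by rw [card_pair hij]; exact hw)
  funext r
  have hr := congrArg (r ∈ ·) heq
  simp only [mem_filter, mem_univ, true_and, mem_insert, mem_singleton, eq_iff_iff] at hr
  rw [wt2vec]
  split_ifs with h
  · -- `ZMod 2` is `Fin 2` by definition
    exact Fin.eq_one_of_ne_zero _ (hr.mpr h)
  · exact not_not.mp (mt hr.mp h)

lemma finrank_vanishingOn_compl_pair (hrk : G.rank = h) (hmd : HasMinDistGE2 G) {i j : Fin s}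
    (hij : i ≠ j) :
    Module.finrank (ZMod 2) (vanishingOn G {i, j}ᶜ)
      = if ∃ x, x ᵥ* G = wt2vec i j then 1 else 0 := by
  have hcodeword : ∀ x ∈ vanishingOn G {i, j}ᶜ, x ≠ 0 → x ᵥ* G = wt2vec i j := by
    intro x hx hx0
    refine eq_wt2vec_of_support_subset hij ?_
      (hmd x fun h0 => hx0 (eq_zero_of_vecMul_eq_zero hrk h0))
    simpa using support_subset_compl_of_mem_vanishingOn hx
  split_ifs with hex
  · obtain ⟨x₀, hx₀⟩ := hex
    have hx₀ne : x₀ ≠ 0 := by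
      rintro rfl
      simpa [wt2vec] using congrFun hx₀ i
    have hspan : vanishingOn G {i, j}ᶜ = Submodule.span (ZMod 2) {x₀} := by
      refine le_antisymm (fun x hx => ?_) ?_
      · rcases eq_or_ne x 0 with rfl | hx0
        · exact Submodule.zero_mem _
        · have : x = x₀ := sub_eq_zero.mp <| eq_zero_of_vecMul_eq_zero hrk <| by
            rw [sub_vecMul, hcodeword x hx hx0, hx₀, sub_self]
          rw [this]
          exact Submodule.mem_span_singleton_self x₀
      · rw [Submodule.span_le, Set.singleton_subset_iff]
        intro a ha
        simp only [mem_compl, mem_insert, mem_singleton, not_or] at ha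
        simp [hx₀, wt2vec, ha.1, ha.2]
    rw [hspan, finrank_span_singleton hx₀ne]
  · have : vanishingOn G {i, j}ᶜ = ⊥ := (Submodule.eq_bot_iff _).mpr fun x hx => by
      by_contra hx0
      exact hex ⟨x, hcodeword x hx hx0⟩
    rw [this, finrank_bot]

lemma colRank_eq_of_card_compl_le_one (hrk : G.rank = h) (hmd : HasMinDistGE2 G)
    {A : Finset (Fin s)} (hA : #Aᶜ ≤ 1) : colRank G A ∅ = h := by
  have := colRank_empty_add_finrank_vanishingOn G A
  rwa [vanishingOn_eq_bot hrk hmd hA, finrank_bot, add_zero] at this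

lemma colRank_compl_pair_add (hrk : G.rank = h) (hmd : HasMinDistGE2 G) {i j : Fin s}
    (hij : i ≠ j) :
    colRank G {i, j}ᶜ ∅ + (if ∃ x, x ᵥ* G = wt2vec i j then 1 else 0) = h := by
  rw [← finrank_vanishingOn_compl_pair hrk hmd hij]
  exact colRank_empty_add_finrank_vanishingOn G _

lemma hWeight_wt2vec {i j : Fin s} (hij : i ≠ j) : hWeight (wt2vec i j) = 2 := by
  have : univ.filter (fun r => wt2vec i j r ≠ 0) = {i, j} := by
    ext r
    by_cases hr : r = i ∨ r = j <;> simp [wt2vec, hr] <;> tauto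
  rw [hWeight, this, card_pair hij]

end LocalCode

section TypeCounts

variable {n s : ℕ} (τ : Fin s → Fin n)

lemma map_val_eq_iff_card_filter (B : Finset (Fin s)) (D : Multiset (Fin n)) :
    B.val.map τ = D ↔ ∀ l, #(B.filter (τ · = l)) = D.count l := by
  simp only [Multiset.ext, Multiset.count_map, card_def, filter_val, eq_comm (b := τ _)]

lemma card_filter_le_colCount (A : Finset (Fin s)) (l : Fin n) :
    #(A.filter (τ · = l)) ≤ colCount τ l :=
  card_le_card (filter_subset_filter _ (subset_univ A))

lemma card_filter_compl (A : Finset (Fin s)) (l : Fin n) :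
    #(Aᶜ.filter (τ · = l)) = colCount τ l - #(A.filter (τ · = l)) := by
  have hunion : A.filter (τ · = l) ∪ Aᶜ.filter (τ · = l) = univ.filter (τ · = l) := by
    rw [← filter_union, union_compl]
  have hdisj : Disjoint (A.filter (τ · = l)) (Aᶜ.filter (τ · = l)) :=
    disjoint_filter_filter disjoint_compl_right
  rw [colCount, ← hunion, card_union_of_disjoint hdisj]
  omega

lemma sum_filter_card_filter_eq_colCount_sub {M : Type*} [AddCommMonoid M]
    (F : Finset (Fin s) → M) (D : Multiset (Fin n)) (hD : ∀ l, D.count l ≤ colCount τ l) :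
    ∑ A ∈ univ.filter (fun A : Finset (Fin s) =>
        ∀ l, #(A.filter (τ · = l)) = colCount τ l - D.count l), F A
      = ∑ B ∈ univ.filter (fun B : Finset (Fin s) => B.val.map τ = D), F Bᶜ := by
  refine sum_nbij' compl compl (fun A hA => ?_) (fun B hB => ?_) (fun _ _ => compl_compl _)
    (fun _ _ => compl_compl _) (fun A _ => by rw [compl_compl])
  · simp only [mem_filter, mem_univ, true_and] at hA ⊢
    refine (map_val_eq_iff_card_filter τ _ D).mpr fun l => ?_
    have := card_filter_le_colCount τ A l
    rw [card_filter_compl, hA l]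
    have := hD l
    omega
  · simp only [mem_filter, mem_univ, true_and] at hB ⊢
    intro l
    have := (map_val_eq_iff_card_filter τ B D).mp hB l
    rw [card_filter_compl, this]

lemma sum_filter_map_val_eq_zero {M : Type*} [AddCommMonoid M] (F : Finset (Fin s) → M) :
    ∑ B ∈ univ.filter (fun B : Finset (Fin s) => B.val.map τ = 0), F B = F ∅ := by
  have : univ.filter (fun B : Finset (Fin s) => B.val.map τ = 0) = {∅} := by
    ext B
    simp
  rw [this, sum_singleton]

lemma sum_filter_map_val_eq_singleton {M : Type*} [AddCommMonoid M] (F : Finset (Fin s) → M)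
    (m : Fin n) :
    ∑ B ∈ univ.filter (fun B : Finset (Fin s) => B.val.map τ = {m}), F B
      = ∑ j ∈ univ.filter (τ · = m), F {j} := by
  symm
  refine sum_bij (fun j _ => {j}) (fun j hj => ?_) (fun _ _ _ _ h => singleton_injective h)
    (fun B hB => ?_) (fun _ _ => rfl)
  · simpa using hj
  · simp only [mem_filter, mem_univ, true_and, Multiset.map_eq_singleton,
      val_eq_singleton_iff] at hB ⊢
    obtain ⟨j, rfl, hj⟩ := hB
    exact ⟨j, hj, rfl⟩

def orderedPairs (l m : Fin n) : Finset (Fin s × Fin s) :=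
  univ.filter fun p => p.1 ≠ p.2 ∧ τ p.1 = l ∧ τ p.2 = m

lemma card_orderedPairs (l m : Fin n) :
    #(orderedPairs τ l m) = colCount τ l * (colCount τ m - if l = m then 1 else 0) := by
  by_cases hlm : l = m
  · subst hlm
    have : orderedPairs τ l l = (univ.filter (τ · = l)).offDiag := by
      ext p
      simp only [orderedPairs, mem_filter, mem_univ, true_and, mem_offDiag]
      tauto
    rw [this, offDiag_card, if_pos rfl, Nat.mul_sub_one]
    rfl
  · have : orderedPairs τ l m = univ.filter (τ · = l) ×ˢ univ.filter (τ · = m) := by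
      ext p
      simp only [orderedPairs, mem_filter, mem_univ, true_and, mem_product, and_iff_right_iff_imp]
      rintro ⟨h1, h2⟩ heq
      exact hlm (h1 ▸ h2 ▸ congrArg τ heq)
    rw [this, card_product, if_neg hlm, Nat.sub_zero]
    rfl

lemma pair_eq_pair_iff_of_ne {α : Type*} [DecidableEq α] {a b x y : α} (hab : a ≠ b) :
    (x ≠ y ∧ ({x, y} : Finset α) = {a, b}) ↔ (x = a ∧ y = b) ∨ (x = b ∧ y = a) := by
  constructor
  · rintro ⟨hxy, he⟩
    have hx : x ∈ ({a, b} : Finset α) := he ▸ by simp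
    have hy : y ∈ ({a, b} : Finset α) := he ▸ by simp
    simp only [mem_insert, mem_singleton] at hx hy
    grind
  · rintro (⟨rfl, rfl⟩ | ⟨rfl, rfl⟩)
    · exact ⟨hab, rfl⟩
    · exact ⟨hab.symm, pair_comm _ _⟩

lemma card_orderedPairs_filter_pair_eq {l m : Fin n} {B : Finset (Fin s)}
    (hB : B.val.map τ = {l, m}) :
    #((orderedPairs τ l m).filter (fun p => {p.1, p.2} = B)) = if l = m then 2 else 1 := by
  obtain ⟨a, ha, hal, hrest⟩ := (Multiset.map_eq_cons τ B.val {m} l).mpr hB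
  obtain ⟨b, hb, hbm⟩ := Multiset.map_eq_singleton.mp hrest
  have hBval : B.val = a ::ₘ {b} := by rw [← hb, Multiset.cons_erase ha]
  have hab : a ≠ b := by
    have := B.nodup
    rw [hBval, Multiset.nodup_cons] at this
    simpa using this.1
  have hBab : B = {a, b} := by
    rw [← val_inj, hBval, insert_val_of_notMem (by simpa using hab), singleton_val]
  have hfiber : (orderedPairs τ l m).filter (fun p => {p.1, p.2} = B)
      = if l = m then {(a, b), (b, a)} else {(a, b)} := by
    ext ⟨x, y⟩
    have hpair := pair_eq_pair_iff_of_ne (x := x) (y := y) hab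
    simp only [orderedPairs, mem_filter, mem_univ, true_and, hBab] at hpair ⊢
    split_ifs with hlm <;> simp only [mem_insert, mem_singleton, Prod.mk.injEq] <;> grind
  rw [hfiber]
  split_ifs
  · exact card_pair (by simp [hab])
  · exact card_singleton _

lemma sum_orderedPairs (F : Finset (Fin s) → ℕ) (l m : Fin n) :
    ∑ p ∈ orderedPairs τ l m, F {p.1, p.2}
      = (if l = m then 2 else 1) *
        ∑ B ∈ univ.filter (fun B : Finset (Fin s) => B.val.map τ = {l, m}), F B := by
  rw [← sum_fiberwise_of_maps_to
    (t := univ.filter (fun B : Finset (Fin s) => B.val.map τ = {l, m}))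
    (g := fun p : Fin s × Fin s => ({p.1, p.2} : Finset (Fin s))), mul_sum]
  · refine sum_congr rfl fun B hB => ?_
    rw [sum_congr rfl fun p hp => congrArg F (mem_filter.mp hp).2, sum_const, smul_eq_mul,
      card_orderedPairs_filter_pair_eq τ (mem_filter.mp hB).2]
  · intro p hp
    simp only [orderedPairs, mem_filter, mem_univ, true_and] at hp ⊢
    rw [insert_val_of_notMem (by simpa using hp.1), Multiset.map_cons, singleton_val,
      Multiset.map_singleton, hp.2.1, hp.2.2]
    rfl

end TypeCounts

section InformationFunction

variable {n h s : ℕ} {G : Matrix (Fin h) (Fin s) (ZMod 2)} (τ : Fin s → Fin n)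

lemma eTildeC_colCount_sub_count (D : Multiset (Fin n)) (hD : ∀ l, D.count l ≤ colCount τ l) :
    eTildeC G τ (fun l => colCount τ l - D.count l)
      = ∑ B ∈ univ.filter (fun B : Finset (Fin s) => B.val.map τ = D), colRank G Bᶜ ∅ :=
  sum_filter_card_filter_eq_colCount_sub τ _ D hD

lemma eTildeC_colCount (hrk : G.rank = h) (hmd : HasMinDistGE2 G) :
    eTildeC G τ (colCount τ) = h :=
  calc eTildeC G τ (colCount τ)
      = eTildeC G τ (fun l => colCount τ l - (0 : Multiset (Fin n)).count l) := by simp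
    _ = colRank G ∅ᶜ ∅ := by
      rw [eTildeC_colCount_sub_count τ 0 (by simp), sum_filter_map_val_eq_zero]
    _ = h := colRank_eq_of_card_compl_le_one hrk hmd (by simp)

lemma eTildeC_colCount_sub_single (hrk : G.rank = h) (hmd : HasMinDistGE2 G) {m : Fin n}
    (hm : 0 < colCount τ m) :
    eTildeC G τ (fun l => colCount τ l - (Pi.single m 1 : Fin n → ℕ) l) = colCount τ m * h :=
  calc eTildeC G τ (fun l => colCount τ l - (Pi.single m 1 : Fin n → ℕ) l)
      = eTildeC G τ (fun l => colCount τ l - ({m} : Multiset (Fin n)).count l) := by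
        simp only [Multiset.count_singleton, Pi.single_apply]
    _ = ∑ j ∈ univ.filter (τ · = m), colRank G {j}ᶜ ∅ := by
      rw [eTildeC_colCount_sub_count, sum_filter_map_val_eq_singleton]
      intro l
      rw [Multiset.count_singleton]
      split_ifs with hl
      · exact hl ▸ hm
      · exact Nat.zero_le _
    _ = ∑ j ∈ univ.filter (τ · = m), h :=
      sum_congr rfl fun j _ => colRank_eq_of_card_compl_le_one hrk hmd (by simp)
    _ = colCount τ m * h := by rw [sum_const, smul_eq_mul, colCount]

lemma xi2_eq_card_filter_orderedPairs (l m : Fin n) :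
    xi2 G τ l m = #((orderedPairs τ l m).filter fun p => ∃ x, x ᵥ* G = wt2vec p.1 p.2) := by
  rw [orderedPairs, filter_filter, xi2]
  simp only [and_assoc]

lemma xi2_eq_zero_of_not_hasMinDistEq2 (hmd : HasMinDistGE2 G) (hG : ¬HasMinDistEq2 G)
    (l m : Fin n) : xi2 G τ l m = 0 := by
  refine card_eq_zero.mpr (filter_eq_empty_iff.mpr fun p _ hp => ?_)
  obtain ⟨hne, -, -, x, hx⟩ := hp
  exact hG ⟨hmd, x, by rw [hx, hWeight_wt2vec hne]⟩

lemma xi2_eq_zero_of_colCount_le {l m : Fin n} (hm : colCount τ m ≤ if l = m then 1 else 0) :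
    xi2 G τ l m = 0 := by
  have hpairs : #(orderedPairs τ l m) = 0 := by
    rw [card_orderedPairs, Nat.sub_eq_zero_of_le hm, mul_zero]
  exact Nat.le_zero.mp <| hpairs ▸
    (xi2_eq_card_filter_orderedPairs τ l m).trans_le (card_filter_le _ _)

lemma mul_eTildeC_colCount_sub_pair_add_xi2 (hrk : G.rank = h) (hmd : HasMinDistGE2 G)
    {l m : Fin n} (hl : 0 < colCount τ l) (hm : (if l = m then 1 else 0) < colCount τ m) :
    (if l = m then 2 else 1) *
        eTildeC G τ
          (fun l' => colCount τ l' - (Pi.single m 1 : Fin n → ℕ) l' - if l' = l then 1 else 0)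
      + xi2 G τ l m = #(orderedPairs τ l m) * h := by
  have hcount :
      (fun l' => colCount τ l' - (Pi.single m 1 : Fin n → ℕ) l' - if l' = l then 1 else 0)
      = fun l' => colCount τ l' - ({l, m} : Multiset (Fin n)).count l' := by
    funext l'
    rw [Nat.sub_sub, Multiset.insert_eq_cons, Multiset.count_cons, Multiset.count_singleton,
      Pi.single_apply]
  have hD : ∀ l', ({l, m} : Multiset (Fin n)).count l' ≤ colCount τ l' := by
    intro l'
    rw [Multiset.insert_eq_cons, Multiset.count_cons, Multiset.count_singleton]
    split_ifs at hm ⊢ <;> subst_vars <;> omega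
  rw [hcount, eTildeC_colCount_sub_count τ _ hD, ← sum_orderedPairs,
    xi2_eq_card_filter_orderedPairs, card_filter,
    ← sum_add_distrib, sum_congr rfl fun p hp => colRank_compl_pair_add hrk hmd ?_, sum_const,
    smul_eq_mul]
  exact (mem_filter.mp hp).2.1

lemma aCN_zero (hrk : G.rank = h) (hmd : HasMinDistGE2 G) {l : Fin n}
    (hl : 0 < colCount τ l) : aCN G τ l 0 = 0 := by
  have hsingle := eTildeC_colCount_sub_single τ hrk hmd hl
  simp only [Pi.single_apply] at hsingle
  simp only [aCN, Pi.zero_apply, Nat.sub_zero, zero_add, eTildeC_colCount τ hrk hmd, hsingle]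
  push_cast
  ring

lemma aCN_single (hrk : G.rank = h) (hmd : HasMinDistGE2 G) {l m : Fin n}
    (hl : 0 < colCount τ l) (hm : (if l = m then 1 else 0) < colCount τ m) :
    aCN G τ l (Pi.single m 1) = xi2 G τ l m := by
  have hpair := mul_eTildeC_colCount_sub_pair_add_xi2 τ hrk hmd hl hm
  rw [card_orderedPairs] at hpair
  have hnat : ((Pi.single m 1 : Fin n → ℕ) l + 1) *
        eTildeC G τ
          (fun l' => colCount τ l' - (Pi.single m 1 : Fin n → ℕ) l' - if l' = l then 1 else 0)
      + xi2 G τ l m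
        = (colCount τ l - (Pi.single m 1 : Fin n → ℕ) l) * (colCount τ m * h) := by
    rw [Pi.single_apply]
    split_ifs at hpair ⊢ with hlm
    · subst hlm
      rw [hpair]
      ring
    · rw [Nat.sub_zero, ← mul_assoc, zero_add, hpair, Nat.sub_zero]
  have hreal := congrArg (Nat.cast : ℕ → ℝ) hnat
  rw [aCN, eTildeC_colCount_sub_single τ hrk hmd (by split_ifs at hm <;> omega)]
  push_cast at hreal ⊢
  linarith

end InformationFunction

section ExitFunction

lemma hasDerivAt_one_sub_pow_mul_pow (a b : ℕ) :
    HasDerivAt (fun x : ℝ => (1 - x) ^ a * x ^ b)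
      (if a = 0 then (b : ℝ) else if a = 1 then -1 else 0) 1 := by
  refine ((((hasDerivAt_id (1 : ℝ)).const_sub 1).pow a).mul (hasDerivAt_pow b 1)).congr_deriv ?_
  rcases a with _ | _ | a <;> simp

variable {n h s : ℕ} (τ : Fin s → Fin n)

lemma IEC_update_one (G : Matrix (Fin h) (Fin s) (ZMod 2)) (l m : Fin n) (x : ℝ) :
    IEC G τ l (Function.update (fun _ => 1) m x)
      = 1 - 1 / (colCount τ l : ℝ) * ∑ t ∈ tRange (colCount τ) l,
          ((∏ l' ∈ univ.erase m, (0 : ℝ) ^ t l') * aCN G τ l t) *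
            ((1 - x) ^ t m * x ^ (colCount τ m - t m - if m = l then 1 else 0)) := by
  rw [IEC]
  congr 2
  refine sum_congr rfl fun t _ => ?_
  rw [← mul_prod_erase univ _ (mem_univ m), prod_congr rfl fun l' hl' => by
    rw [Function.update_of_ne (ne_of_mem_erase hl'), sub_self, one_pow, mul_one],
    Function.update_self]
  ring

lemma single_mem_tRange_iff {l m : Fin n} (hl : 0 < colCount τ l) :
    Pi.single m 1 ∈ tRange (colCount τ) l ↔ (if l = m then 1 else 0) < colCount τ m := by
  simp only [tRange, Fintype.mem_piFinset, mem_range, Pi.single_apply]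
  constructor
  · intro hmem
    have := hmem m
    split_ifs at this ⊢ <;> subst_vars <;> simp_all
  · intro hm l'
    split_ifs at hm ⊢ <;> subst_vars <;> simp_all

lemma hasDerivAt_IEC_update_one {G : Matrix (Fin h) (Fin s) (ZMod 2)} (hrk : G.rank = h)
    (hmd : HasMinDistGE2 G) {l m : Fin n} (hl : 0 < colCount τ l) :
    HasDerivAt (fun x : ℝ => IEC G τ l (Function.update (fun _ => 1) m x))
      (xi2 G τ l m / colCount τ l) 1 := by
  set w : (Fin n → ℕ) → ℝ := fun t =>
    (∏ l' ∈ univ.erase m, (0 : ℝ) ^ t l') * aCN G τ l t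
  set β : (Fin n → ℕ) → ℕ := fun t => colCount τ m - t m - if m = l then 1 else 0
  set d : (Fin n → ℕ) → ℝ := fun t =>
    if t m = 0 then (β t : ℝ) else if t m = 1 then -1 else 0
  have hderiv : HasDerivAt (fun x : ℝ => IEC G τ l (Function.update (fun _ => 1) m x))
      (-(1 / colCount τ l * ∑ t ∈ tRange (colCount τ) l, w t * d t)) 1 := by
    simp only [IEC_update_one]
    exact ((HasDerivAt.fun_sum fun t _ =>
      (hasDerivAt_one_sub_pow_mul_pow (t m) (β t)).const_mul (w t)).const_mul _).const_sub 1
  have hvanish : ∀ t, t ≠ Pi.single m 1 → w t * d t = 0 := by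
    intro t ht
    by_cases hsupp : ∀ l' ≠ m, t l' = 0
    · have ht' : t = Pi.single m (t m) := by
        funext l'
        by_cases hl'm : l' = m
        · subst hl'm; simp
        · simp [hl'm, hsupp l' hl'm]
      rcases htm : t m with _ | _ | k
      · rw [htm, Pi.single_zero] at ht'
        simp [w, ht', aCN_zero τ hrk hmd hl]
      · rw [htm] at ht'
        exact absurd ht' ht
      · simp [d, htm]
    · obtain ⟨l', hl'm, hl'0⟩ : ∃ l' ≠ m, t l' ≠ 0 := by simpa using hsupp
      have hprod : ∏ l' ∈ univ.erase m, (0 : ℝ) ^ t l' = 0 :=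
        prod_eq_zero (mem_erase.mpr ⟨hl'm, mem_univ l'⟩) (zero_pow hl'0)
      simp [w, hprod]
  have hsum : ∑ t ∈ tRange (colCount τ) l, w t * d t = -xi2 G τ l m := by
    by_cases hm : (if l = m then 1 else 0) < colCount τ m
    · rw [sum_eq_single_of_mem _ ((single_mem_tRange_iff τ hl).mpr hm) fun t _ ht => hvanish t ht]
      have hprod : ∏ l' ∈ univ.erase m, (0 : ℝ) ^ (Pi.single m 1 : Fin n → ℕ) l' = 1 :=
        prod_eq_one fun l' hl' => by rw [Pi.single_eq_of_ne (ne_of_mem_erase hl'), pow_zero]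
      have hw : w (Pi.single m 1) = xi2 G τ l m := by
        simp [w, aCN_single τ hrk hmd hl hm, hprod]
      simp [hw, d]
    · rw [sum_eq_zero fun t ht =>
        hvanish t (by rintro rfl; exact hm ((single_mem_tRange_iff τ hl).mp ht))]
      simp [xi2_eq_zero_of_colCount_le τ (not_lt.mp hm)]
  refine hderiv.congr_deriv ?_
  rw [hsum]
  ring

end ExitFunction

theorem deriv_IECagg_eq_Cmat_general {n : ℕ} (C : CNSide n) (hC : C.Good)
    (l m : Fin n) :
    deriv (fun x : ℝ => IECagg C l (Function.update (fun _ => (1 : ℝ)) m x)) 1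
      = Cmat C l m := by
  have hderiv : HasDerivAt (fun x : ℝ => IECagg C l (Function.update (fun _ => 1) m x))
      (∑ δ ∈ univ.filter (fun δ => 0 < C.rho δ l),
        C.rho δ l * (xi2 (C.cn δ).G (C.cn δ).τ l m / colCount (C.cn δ).τ l)) 1 :=
    HasDerivAt.fun_sum fun δ hδ => (hasDerivAt_IEC_update_one _ (hC δ).1 (hC δ).2
      ((C.rho_pos_iff δ l).mp (mem_filter.mp hδ).2)).const_mul _
  rw [hderiv.deriv, Cmat, Matrix.of_apply, sum_filter]
  refine sum_congr rfl fun δ _ => ?_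
  split_ifs with hpos hG hG
  · ring
  · simp [xi2_eq_zero_of_not_hasMinDistEq2 _ (hC δ).2 hG]
  · simp [le_antisymm (not_lt.mp hpos) (C.rho_nonneg δ l)]
  · rfl

/-- **CN-side derivative identity.** The partial derivative of the aggregate CN EXIT
function `I_{EC,l}` with respect to its `m`-th argument, at the all-ones point,
equals `C^{l,m}`. -/
theorem deriv_IECagg_eq_Cmat {n : ℕ} (hn : 1 ≤ n) (C : CNSide n) (hC : C.Good)
    (l m : Fin n) :
    deriv (fun x : ℝ => IECagg C l (Function.update (fun _ => (1 : ℝ)) m x)) 1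
      = Cmat C l m :=
  deriv_IECagg_eq_Cmat_general C hC l m
end MET
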